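/- arXiv:2407.10751 — 4 statements merged into one kernel-verified Lean document; each statement's English description precedes it below -/
import Mathlib

section
/- Let ν > 0, let ξ = (ξ₁, ξ₂) ∈ ℝ² be nonzero with Euclidean norm |ξ|, let μ ∈ ℂ satisfy Re μ > 0 and μ ≠ |ξ|, and set λ := ν μ² − ν|ξ|² (note λ ≠ 0). Let f : [0,∞) → ℂ² be continuous with compact support. Define the 2×2 matrix K := [[ξ₂², −ξ₁ξ₂], [−ξ₁ξ₂, ξ₁²]] and, for y ≥ 0, u(y) := ∫₀^∞ [ (1/(2νμ)) (e^{−μ|y−z|} + e^{−μ(y+z)}) I₂ + ((μ + |ξ|)/(μ λ |ξ|)) e^{−μ(y+z)} K ] f(z) dz, where I₂ is the 2×2 identity matrix. Then u is twice differentiable on (0,∞) with λ u(y) − ν (u''(y) − |ξ|² u(y)) = f(y) for every y > 0, and u satisfies the boundary condition −(u'(0) + |ξ| u(0)) + |ξ|⁻¹ (ξ₁ u₁(0) + ξ₂ u₂(0)) (ξ₁, ξ₂) = 0, where u'(0) is the one-sided derivative at 0. -/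
/-!
For `y ≥ 0`, splitting `∫₀^∞` at `z = y` puts the kernel integral in variation-of-constants form
`u y = a (∫₀^y e^{-μ(y-z)} f - ∫₀^y e^{μ(y-z)} f) + e^{μy} W + e^{-μy} V`, with `a = 1/(2νμ)` and
`W`, `V` built from the Laplace transform `C = ∫₀^∞ e^{-μz} f`. This closed form is defined on all
of `ℝ` and satisfies `u'' = μ² u - 2μa f`, which is the resolvent equation because
`λ = ν(μ² - |ξ|²)` and `2νμa = 1`. At `0` it gives `u 0 = 2aC + bKC` and `u' 0 = -μbKC`; since
`K = |ξ|² - ξξᵀ` annihilates `ξ`, the boundary condition reduces to `(μ - |ξ|) b |ξ| = 2a`, which is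
what the residual coefficient `b = (μ + |ξ|)/(μλ|ξ|)` is chosen for.
-/

open MeasureTheory Set Complex

noncomputable section

open Filter Topology

theorem hasDerivAt_cexp_mul_ofReal (c : ℂ) (t : ℝ) :
    HasDerivAt (fun t : ℝ => exp (c * t)) (c * exp (c * t)) t := by
  simpa [mul_comm] using ((ofRealCLM.hasDerivAt (x := t)).const_mul c).cexp

section ODE

variable {E : Type*} [NormedAddCommGroup E] [NormedSpace ℂ E]

def expConv (c : ℂ) (f : ℝ → E) (t : ℝ) : E :=
  exp (-c * t) • ∫ z in (0 : ℝ)..t, exp (c * z) • f z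

@[simp]
theorem expConv_zero (c : ℂ) (f : ℝ → E) : expConv c f 0 = 0 := by
  simp [expConv]

theorem hasDerivAt_expConv [CompleteSpace E] (c : ℂ) {f : ℝ → E} (hf : Continuous f) (t : ℝ) :
    HasDerivAt (expConv c f) (-c • expConv c f t + f t) t := by
  have hF : Continuous fun z : ℝ => exp (c * z) • f z := by fun_prop
  have hI := hF.integral_hasStrictDerivAt 0 t |>.hasDerivAt
  have hone : exp (-c * t) * exp (c * t) = 1 := by rw [← exp_add]; simp
  refine ((hasDerivAt_cexp_mul_ofReal (-c) t).smul hI).congr_deriv ?_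
  simp only [expConv, smul_smul, hone, one_smul]
  abel

variable (μ a : ℂ) (f : ℝ → E) (W V : E)

/-- Variation of constants: the solutions of `w'' = μ² w - 2 μ a f`. -/
def odeSol (t : ℝ) : E :=
  a • (expConv μ f t - expConv (-μ) f t) + exp (μ * t) • W + exp (-μ * t) • V

def odeSolDeriv (t : ℝ) : E :=
  -(a * μ) • (expConv μ f t + expConv (-μ) f t) + (μ * exp (μ * t)) • W
    - (μ * exp (-μ * t)) • V

variable {f}

theorem hasDerivAt_odeSol [CompleteSpace E] (hf : Continuous f) (t : ℝ) :
    HasDerivAt (odeSol μ a f W V) (odeSolDeriv μ a f W V t) t := by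
  have hP := (hasDerivAt_expConv μ hf t).sub (hasDerivAt_expConv (-μ) hf t)
  have hE := ((hP.const_smul a).add ((hasDerivAt_cexp_mul_ofReal μ t).smul_const W)).add
    ((hasDerivAt_cexp_mul_ofReal (-μ) t).smul_const V)
  refine hE.congr_deriv ?_
  simp only [odeSolDeriv, neg_neg]
  module

theorem hasDerivAt_odeSolDeriv [CompleteSpace E] (hf : Continuous f) (t : ℝ) :
    HasDerivAt (odeSolDeriv μ a f W V)
      (μ ^ 2 • odeSol μ a f W V t - (2 * μ * a) • f t) t := by
  have hP := (hasDerivAt_expConv μ hf t).add (hasDerivAt_expConv (-μ) hf t)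
  have hE := ((hP.const_smul (-(a * μ))).add
    (((hasDerivAt_cexp_mul_ofReal μ t).const_mul μ).smul_const W)).sub
    (((hasDerivAt_cexp_mul_ofReal (-μ) t).const_mul μ).smul_const V)
  refine hE.congr_deriv ?_
  simp only [odeSol, neg_neg]
  module

@[simp]
theorem odeSol_zero : odeSol μ a f W V 0 = W + V := by
  simp [odeSol]

@[simp]
theorem odeSolDeriv_zero : odeSolDeriv μ a f W V 0 = μ • W - μ • V := by
  simp [odeSolDeriv]

end ODE

section Kernel

variable {E : Type*} [NormedAddCommGroup E] [NormedSpace ℂ E] {f : ℝ → E}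

def laplaceTransform (μ : ℂ) (f : ℝ → E) : E :=
  ∫ z in Ioi (0 : ℝ), exp (-μ * z) • f z

theorem setIntegral_Ioi_exp_abs_sub_smul [CompleteSpace E] (μ : ℂ) (hf : Continuous f)
    (hfc : HasCompactSupport f) {y : ℝ} (hy : 0 ≤ y) :
    ∫ z in Ioi (0 : ℝ), exp (-μ * (|y - z| : ℝ)) • f z
      = expConv μ f y - expConv (-μ) f y + exp (μ * y) • laplaceTransform μ f := by
  have hint : ∀ c : ℝ → ℂ, Continuous c → ∀ s, IntegrableOn (fun z => c z • f z) s :=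
    fun _ hc _ => ((hc.smul hf).integrable_of_hasCompactSupport hfc.smul_left).integrableOn
  have hleft : ∫ z in (0 : ℝ)..y, exp (-μ * (|y - z| : ℝ)) • f z = expConv μ f y := by
    rw [expConv, ← intervalIntegral.integral_smul]
    refine intervalIntegral.integral_congr fun z hz => ?_
    rw [uIcc_of_le hy] at hz
    rw [abs_of_nonneg (sub_nonneg.2 hz.2), smul_smul, ← exp_add]
    push_cast
    ring_nf
  have hright : ∫ z in Ioi y, exp (-μ * (|y - z| : ℝ)) • f z
      = exp (μ * y) • ∫ z in Ioi y, exp (-μ * z) • f z := by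
    rw [← integral_smul]
    refine setIntegral_congr_fun measurableSet_Ioi fun z hz => ?_
    rw [abs_of_nonpos (sub_nonpos.2 (le_of_lt hz)), smul_smul, ← exp_add]
    push_cast
    ring_nf
  have htail : ∫ z in Ioi y, exp (-μ * z) • f z
      = laplaceTransform μ f - ∫ z in (0 : ℝ)..y, exp (-μ * z) • f z :=
    eq_sub_of_add_eq' (intervalIntegral.integral_interval_add_Ioi (hint _ (by fun_prop) _)
      (hint _ (by fun_prop) _))
  rw [← intervalIntegral.integral_interval_add_Ioi (hint _ (by fun_prop) _)
    (hint _ (by fun_prop) _), hleft, hright, htail]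
  simp only [expConv, neg_neg, smul_sub]
  abel

theorem setIntegral_Ioi_exp_add_smul (μ : ℂ) (g : ℝ → E) (y : ℝ) :
    ∫ z in Ioi (0 : ℝ), exp (-μ * ((y + z : ℝ) : ℂ)) • g z
      = exp (-μ * y) • laplaceTransform μ g := by
  rw [laplaceTransform, ← integral_smul]
  congr 1 with z
  rw [smul_smul, ← exp_add]
  push_cast
  ring_nf

theorem setIntegral_greenKernel_eq_odeSol [CompleteSpace E] (μ a b : ℂ) (L : E →L[ℂ] E)
    (hf : Continuous f) (hfc : HasCompactSupport f) {y : ℝ} (hy : 0 ≤ y) :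
    ∫ z in Ioi (0 : ℝ),
        (a * (exp (-μ * (|y - z| : ℝ)) + exp (-μ * ((y + z : ℝ) : ℂ)))) • f z
          + (b * exp (-μ * ((y + z : ℝ) : ℂ))) • L (f z)
      = odeSol μ a f (a • laplaceTransform μ f)
          (a • laplaceTransform μ f + b • L (laplaceTransform μ f)) y := by
  have hint : ∀ {g : ℝ → E}, Continuous g → HasCompactSupport g → ∀ {c : ℝ → ℂ}, Continuous c →
      Integrable (fun z => c z • g z) (volume.restrict (Ioi 0)) :=
    fun hg hgc _ hc => ((hc.smul hg).integrable_of_hasCompactSupport hgc.smul_left).integrableOn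
  have hLf : Continuous fun z => L (f z) := L.continuous.comp hf
  have hLfc : HasCompactSupport fun z => L (f z) := hfc.comp_left L.map_zero
  have hheat := hint hf hfc (c := fun z => exp (-μ * (|y - z| : ℝ))) (by fun_prop)
  have hrefl := hint hf hfc (c := fun z => exp (-μ * ((y + z : ℝ) : ℂ))) (by fun_prop)
  have hres := hint hLf hLfc (c := fun z => exp (-μ * ((y + z : ℝ) : ℂ))) (by fun_prop)
  have hlap : laplaceTransform μ (fun z => L (f z)) = L (laplaceTransform μ f) := by
    simp only [laplaceTransform, ← L.map_smul]
    exact L.integral_comp_comm (hint hf hfc (by fun_prop))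
  calc _ = ∫ z in Ioi (0 : ℝ), a • (exp (-μ * (|y - z| : ℝ)) • f z)
          + (a • (exp (-μ * ((y + z : ℝ) : ℂ)) • f z)
            + b • (exp (-μ * ((y + z : ℝ) : ℂ)) • L (f z))) := by
        congr 1 with z
        simp only [smul_smul, mul_add, add_smul, add_assoc]
    _ = _ := by
      rw [integral_add, integral_add, integral_smul, integral_smul, integral_smul,
        setIntegral_Ioi_exp_abs_sub_smul μ hf hfc hy, setIntegral_Ioi_exp_add_smul,
        setIntegral_Ioi_exp_add_smul, hlap, odeSol]
      · module
      exacts [hrefl.smul a, hres.smul b, hheat.smul a, (hrefl.smul a).add (hres.smul b)]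

end Kernel

section

variable {E : Type*} [NormedAddCommGroup E] [NormedSpace ℝ E]

theorem hasDerivAt_deriv_of_eqOn_Ioi {u g g' : ℝ → E} {g'' : E} {a y : ℝ} (hug : EqOn u g (Ioi a))
    (hg : ∀ t ∈ Ioi a, HasDerivAt g (g' t) t) (hg' : HasDerivAt g' g'' y) (hy : a < y) :
    HasDerivAt u (g' y) y ∧ HasDerivAt (deriv u) g'' y := by
  have hderiv : deriv u =ᶠ[𝓝 y] g' := by
    filter_upwards [Ioi_mem_nhds hy] with t ht
    exact ((hg t ht).congr_of_eventuallyEq (hug.eventuallyEq_of_mem (Ioi_mem_nhds ht))).deriv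
  exact ⟨(hg y hy).congr_of_eventuallyEq (hug.eventuallyEq_of_mem (Ioi_mem_nhds hy)),
    hg'.congr_of_eventuallyEq hderiv⟩

end

theorem residual_coefficient_identity {ν s : ℝ} {μ lam : ℂ} (hν : 0 < ν) (hs : 0 < s)
    (hμre : 0 < μ.re) (hμ : μ ≠ s) (hlam : lam = ν * μ ^ 2 - ν * s ^ 2) :
    (μ - s) * ((μ + s) / (μ * lam * s)) * s = 2 * (1 / (2 * ν * μ)) := by
  have hμ0 : μ ≠ 0 := fun h => by simp [h] at hμre
  have hμs : μ + s ≠ 0 := fun h => by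
    have := congrArg re h
    simp only [add_re, ofReal_re, zero_re] at this
    linarith
  have hμs' : μ - s ≠ 0 := sub_ne_zero.2 hμ
  have hν0 : (ν : ℂ) ≠ 0 := by exact_mod_cast hν.ne'
  have hs0 : (s : ℂ) ≠ 0 := by exact_mod_cast hs.ne'
  rw [show lam = ν * (μ - s) * (μ + s) by rw [hlam]; ring]
  field_simp

theorem vorticity_boundary_condition {ξ₁ ξ₂ s : ℝ} {μ a b : ℂ} {K : Matrix (Fin 2) (Fin 2) ℂ}
    (hK : K = !![((ξ₂ ^ 2 : ℝ) : ℂ), -(((ξ₁ * ξ₂ : ℝ) : ℂ));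
                 -(((ξ₁ * ξ₂ : ℝ) : ℂ)), ((ξ₁ ^ 2 : ℝ) : ℂ)])
    (hs : s ≠ 0) (hs2 : s ^ 2 = ξ₁ ^ 2 + ξ₂ ^ 2) (hab : (μ - s) * b * s = 2 * a)
    {C u₀ u₁ : Fin 2 → ℂ} (hu₀ : u₀ = (2 * a) • C + b • K.mulVec C)
    (hu₁ : u₁ = -(μ * b) • K.mulVec C) :
    -(u₁ + (s : ℂ) • u₀) + (s : ℂ)⁻¹ • (((ξ₁ : ℂ) * u₀ 0 + (ξ₂ : ℂ) * u₀ 1) • ![(ξ₁ : ℂ), ξ₂])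
      = 0 := by
  have hs' : (s : ℂ) ≠ 0 := by exact_mod_cast hs
  have hs2' : (s : ℂ) ^ 2 = ξ₁ ^ 2 + ξ₂ ^ 2 := by exact_mod_cast hs2
  subst hK hu₀ hu₁
  ext i
  fin_cases i <;> simp [dotProduct, Fin.sum_univ_two, Matrix.vecHead, Matrix.vecTail] <;>
    field_simp
  · linear_combination (ξ₂ ^ 2 * C 0 - ξ₁ * ξ₂ * C 1) * hab - 2 * a * C 0 * hs2'
  · linear_combination (ξ₁ ^ 2 * C 1 - ξ₁ * ξ₂ * C 0) * hab - 2 * a * C 1 * hs2'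

/-- The explicit Green's function for the resolvent of the Stokes vorticity problem on the
half-line satisfies the resolvent equation and the vorticity boundary condition. -/
theorem stokes_resolvent_green_function
    (ν : ℝ) (hν : 0 < ν)
    (ξ₁ ξ₂ : ℝ) (hξ : (ξ₁, ξ₂) ≠ (0, 0))
    (μ : ℂ) (hμre : 0 < μ.re)
    (hμ : μ ≠ (Real.sqrt (ξ₁ ^ 2 + ξ₂ ^ 2) : ℂ))
    (lam : ℂ) (hlam : lam = (ν : ℂ) * μ ^ 2 - (ν : ℂ) * ((ξ₁ ^ 2 + ξ₂ ^ 2 : ℝ) : ℂ))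
    (f : ℝ → Fin 2 → ℂ) (hf : Continuous f) (hfc : HasCompactSupport f)
    (K : Matrix (Fin 2) (Fin 2) ℂ)
    (hK : K = !![((ξ₂ ^ 2 : ℝ) : ℂ), -(((ξ₁ * ξ₂ : ℝ) : ℂ));
                 -(((ξ₁ * ξ₂ : ℝ) : ℂ)), ((ξ₁ ^ 2 : ℝ) : ℂ)])
    (u : ℝ → Fin 2 → ℂ)
    (hu : ∀ y, u y = ∫ z in Ioi (0 : ℝ),
      ((1 / (2 * (ν : ℂ) * μ)) *
        (Complex.exp (-μ * (|y - z| : ℝ)) + Complex.exp (-μ * ((y + z : ℝ) : ℂ)))) • f z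
      + (((μ + (Real.sqrt (ξ₁ ^ 2 + ξ₂ ^ 2) : ℝ)) /
            (μ * lam * ((Real.sqrt (ξ₁ ^ 2 + ξ₂ ^ 2) : ℝ) : ℂ))) *
          Complex.exp (-μ * ((y + z : ℝ) : ℂ))) • K.mulVec (f z)) :
    (∀ y ∈ Ioi (0 : ℝ),
        DifferentiableAt ℝ u y ∧ DifferentiableAt ℝ (deriv u) y ∧
        lam • u y - (ν : ℂ) • (deriv (deriv u) y - ((ξ₁ ^ 2 + ξ₂ ^ 2 : ℝ) : ℂ) • u y) = f y)
    ∧ -(derivWithin u (Ici 0) 0 + ((Real.sqrt (ξ₁ ^ 2 + ξ₂ ^ 2) : ℝ) : ℂ) • u 0)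
        + (((Real.sqrt (ξ₁ ^ 2 + ξ₂ ^ 2) : ℝ) : ℂ))⁻¹ •
          (((ξ₁ : ℂ) * u 0 0 + (ξ₂ : ℂ) * u 0 1) • ![(ξ₁ : ℂ), (ξ₂ : ℂ)]) = 0 := by
  set s := Real.sqrt (ξ₁ ^ 2 + ξ₂ ^ 2)
  have hsum : 0 < ξ₁ ^ 2 + ξ₂ ^ 2 := by
    by_contra! h
    exact hξ (Prod.ext (pow_eq_zero_iff two_ne_zero |>.1 (by nlinarith [sq_nonneg ξ₂]))
      (pow_eq_zero_iff two_ne_zero |>.1 (by nlinarith [sq_nonneg ξ₁])))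
  have hs : 0 < s := Real.sqrt_pos.2 hsum
  have hs2 : s ^ 2 = ξ₁ ^ 2 + ξ₂ ^ 2 := Real.sq_sqrt hsum.le
  set a : ℂ := 1 / (2 * ν * μ)
  set b : ℂ := (μ + s) / (μ * lam * s)
  set C := laplaceTransform μ f
  have ha : 2 * μ * a * ν = 1 := by
    have hν0 : (ν : ℂ) ≠ 0 := by exact_mod_cast hν.ne'
    have hμ0 : μ ≠ 0 := fun h => by simp [h] at hμre
    simp only [a]
    field_simp
  have hab : (μ - s) * b * s = 2 * a :=
    residual_coefficient_identity hν hs hμre hμ (by rw [hlam, ← hs2]; push_cast; ring)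
  have hug : EqOn u (odeSol μ a f (a • C) (a • C + b • K.mulVec C)) (Ici 0) := fun y hy =>
    (hu y).trans <| setIntegral_greenKernel_eq_odeSol μ a b
      (Matrix.mulVecLin K).toContinuousLinearMap hf hfc hy
  -- otherwise `module` unfolds `a`, `b` and `C`
  clear_value a b C
  refine ⟨fun y hy => ?_, ?_⟩
  · obtain ⟨hu₁, hu₂⟩ := hasDerivAt_deriv_of_eqOn_Ioi (hug.mono Ioi_subset_Ici_self)
      (fun t _ => hasDerivAt_odeSol μ a _ _ hf t) (hasDerivAt_odeSolDeriv μ a _ _ hf y) hy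
    refine ⟨hu₁.differentiableAt, hu₂.differentiableAt, ?_⟩
    rw [hu₂.deriv, ← hug (Ioi_subset_Ici_self hy), hlam]
    linear_combination (norm := module) ha • f y
  · have hderiv : derivWithin u (Ici 0) 0 = odeSolDeriv μ a f (a • C) (a • C + b • K.mulVec C) 0 :=
      ((hasDerivAt_odeSol μ a _ _ hf 0).hasDerivWithinAt.congr_of_mem (fun _ hx => hug hx)
        self_mem_Ici).derivWithin (uniqueDiffOn_Ici 0 0 self_mem_Ici)
    exact vorticity_boundary_condition hK hs.ne' hs2 hab
      (by rw [hug self_mem_Ici, odeSol_zero]; module) (by rw [hderiv, odeSolDeriv_zero]; module)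
end
end

section
/- Let ν > 0, let ξ = (ξ₁, ξ₂) ∈ ℝ² be nonzero, and let T > 0. Let ω : [0,T] × [0,∞) → ℂ² be continuous, with ∂_t ω, ∂_z ω, ∂_z² ω existing and continuous on (0,T] × [0,∞), and suppose: (i) ∂_t ω(t,z) = ν (∂_z² ω(t,z) − |ξ|² ω(t,z)) for all t ∈ (0,T] and z > 0; (ii) for each t ∈ (0,T], the boundary condition −(∂_z ω(t,0) + |ξ| ω(t,0)) + |ξ|⁻¹ (ξ₁ ω₁(t,0) + ξ₂ ω₂(t,0)) (ξ₁, ξ₂) = 0 holds; (iii) ω(0,z) = 0 for all z ≥ 0; (iv) there is a square-integrable function g on (0,∞) such that |ω(t,z)| ≤ g(z) and |∂_t ω(t,z)| ≤ g(z) for all (t,z), and for each t ∈ (0,T] the function z ↦ ∂_z ω(t,z) is square-integrable on (0,∞) and ∂_z ω(t,z)·conj(ω(t,z)) → 0 as z → ∞. Then ω(t,z) = 0 for all (t,z) ∈ [0,T] × [0,∞). -/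
open MeasureTheory Set Complex Filter

open scoped RealInnerProductSpace Topology

/-!
Energy method. With `E(t) = ∫₀^∞ |ω(t,z)|² dz`, the heat equation and one integration by parts
give `E'(t) / 2ν = -Re ⟨ω, ∂_z ω⟩(t,0) - ‖∂_z ω‖² - |ξ|² E(t)`. The vorticity boundary condition
makes the boundary term `|ξ| |ω(t,0)|² - |ξ · ω(t,0)|² / |ξ| ≤ |ξ| |ω(t,0)|²`, and the trace
inequality `|ξ| |ω(0)|² ≤ ‖∂_z ω‖² + |ξ|² ‖ω‖²` (integrate `-∂_z |ω|²` and use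
`0 ≤ |∂_z ω + |ξ| ω|²`) gives `E' ≤ 0`. As `E(0) = 0`, the energy, hence `ω`, vanishes.
-/

namespace MeasureTheory

variable {α F : Type*} [MeasurableSpace α] {μ : Measure α} [NormedAddCommGroup F]

theorem MemLp.integrable_sq_norm {f : α → F} (hf : MemLp f 2 μ) :
    Integrable (fun x => ‖f x‖ ^ 2) μ :=
  (memLp_two_iff_integrable_sq_norm hf.1).mp hf

theorem memLp_two_of_norm_le {f : α → F} {g : α → ℝ} (hf : AEStronglyMeasurable f μ)
    (hg : Integrable (fun x => g x ^ 2) μ) (hfg : ∀ᵐ x ∂μ, ‖f x‖ ≤ g x) : MemLp f 2 μ :=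
  (memLp_two_iff_integrable_sq_norm hf).mpr <| hg.mono' (hf.norm.pow 2) <| by
    filter_upwards [hfg] with x hx
    rw [norm_pow, norm_norm]
    exact pow_le_pow_left₀ (norm_nonneg _) hx 2

variable {E : Type*} [NormedAddCommGroup E] [InnerProductSpace ℝ E]

theorem MemLp.integrable_inner {f g : α → E} (hf : MemLp f 2 μ) (hg : MemLp g 2 μ) :
    Integrable (fun x => ⟪f x, g x⟫) μ :=
  (L2.integrable_inner (𝕜 := ℝ) hf.toLp hg.toLp).congr <| by
    filter_upwards [hf.coeFn_toLp, hg.coeFn_toLp] with x hfx hgx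
    rw [hfx, hgx]

end MeasureTheory

section HalfLine

variable {E : Type*} [NormedAddCommGroup E] [InnerProductSpace ℝ E] {a : ℝ} {v v' v'' w : ℝ → E}

theorem integral_Ioi_two_inner_deriv_eq_neg_sq_norm
    (hd : ∀ z ∈ Ici a, HasDerivWithinAt v (v' z) (Ici a) z)
    (hv : MemLp v 2 (volume.restrict (Ioi a))) (hv' : MemLp v' 2 (volume.restrict (Ioi a))) :
    ∫ z in Ioi a, 2 * ⟪v z, v' z⟫ = -‖v a‖ ^ 2 := by
  have hderiv : ∀ z ∈ Ioi a, HasDerivAt (‖v ·‖ ^ 2) (2 * ⟪v z, v' z⟫) z := fun z hz =>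
    ((hd z (Ioi_subset_Ici_self hz)).hasDerivAt (Ici_mem_nhds hz)).norm_sq
  have hint : IntegrableOn (fun z => 2 * ⟪v z, v' z⟫) (Ioi a) :=
    (hv.integrable_inner hv').const_mul 2
  have hlim := tendsto_zero_of_hasDerivAt_of_integrableOn_Ioi hderiv hint hv.integrable_sq_norm
  rw [integral_Ioi_of_hasDerivAt_of_tendsto (hd a self_mem_Ici).norm_sq.continuousWithinAt
    hderiv hint hlim, zero_sub]

theorem mul_sq_norm_le_integral_Ioi (k : ℝ)
    (hd : ∀ z ∈ Ici a, HasDerivWithinAt v (v' z) (Ici a) z)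
    (hv : MemLp v 2 (volume.restrict (Ioi a))) (hv' : MemLp v' 2 (volume.restrict (Ioi a))) :
    k * ‖v a‖ ^ 2 ≤ (∫ z in Ioi a, ‖v' z‖ ^ 2) + k ^ 2 * ∫ z in Ioi a, ‖v z‖ ^ 2 := by
  -- pointwise, `0 ≤ ‖v' + k • v‖ ^ 2`
  have hpt (z : ℝ) : -k * (2 * ⟪v z, v' z⟫) ≤ ‖v' z‖ ^ 2 + k ^ 2 * ‖v z‖ ^ 2 := by
    have := norm_add_sq_real (v' z) (k • v z)
    rw [real_inner_smul_right, norm_smul, mul_pow, Real.norm_eq_abs, sq_abs,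
      real_inner_comm] at this
    nlinarith [sq_nonneg ‖v' z + k • v z‖]
  have hint : IntegrableOn (fun z => ‖v' z‖ ^ 2 + k ^ 2 * ‖v z‖ ^ 2) (Ioi a) :=
    hv'.integrable_sq_norm.add (hv.integrable_sq_norm.const_mul _)
  calc k * ‖v a‖ ^ 2 = ∫ z in Ioi a, -k * (2 * ⟪v z, v' z⟫) := by
        rw [integral_const_mul, integral_Ioi_two_inner_deriv_eq_neg_sq_norm hd hv hv']; ring
    _ ≤ ∫ z in Ioi a, (‖v' z‖ ^ 2 + k ^ 2 * ‖v z‖ ^ 2) :=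
        setIntegral_mono (((hv.integrable_inner hv').const_mul 2).const_mul (-k))
          hint hpt
    _ = _ := by rw [integral_add hv'.integrable_sq_norm (hv.integrable_sq_norm.const_mul _),
          integral_const_mul]

theorem integral_Ioi_inner_deriv_deriv
    (hd : ∀ z ∈ Ici a, HasDerivWithinAt v (v' z) (Ici a) z)
    (hd' : ∀ z ∈ Ici a, HasDerivWithinAt v' (v'' z) (Ici a) z)
    (hv' : MemLp v' 2 (volume.restrict (Ioi a)))
    (hv'' : IntegrableOn (fun z => ⟪v z, v'' z⟫) (Ioi a))
    (hlim : Tendsto (fun z => ⟪v z, v' z⟫) atTop (𝓝 0)) :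
    ∫ z in Ioi a, ⟪v z, v'' z⟫ = -⟪v a, v' a⟫ - ∫ z in Ioi a, ‖v' z‖ ^ 2 := by
  have hderiv : ∀ z ∈ Ioi a,
      HasDerivAt (fun z => ⟪v z, v' z⟫) (⟪v z, v'' z⟫ + ‖v' z‖ ^ 2) z := fun z hz => by
    have := ((hd z (Ioi_subset_Ici_self hz)).hasDerivAt (Ici_mem_nhds hz)).inner ℝ
      ((hd' z (Ioi_subset_Ici_self hz)).hasDerivAt (Ici_mem_nhds hz))
    rwa [real_inner_self_eq_norm_sq] at this
  have hcont : ContinuousWithinAt (fun z => ⟪v z, v' z⟫) (Ici a) a :=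
    (hd a self_mem_Ici).continuousWithinAt.inner (hd' a self_mem_Ici).continuousWithinAt
  have h := integral_Ioi_of_hasDerivAt_of_tendsto hcont hderiv
    (hv''.add hv'.integrable_sq_norm) hlim
  rw [integral_add hv'' hv'.integrable_sq_norm] at h
  linarith

theorem integral_Ioi_inner_nonpos_of_heat {ν k : ℝ} (hν : 0 < ν)
    (hd : ∀ z ∈ Ici a, HasDerivWithinAt v (v' z) (Ici a) z)
    (hd' : ∀ z ∈ Ici a, HasDerivWithinAt v' (v'' z) (Ici a) z)
    (hv : MemLp v 2 (volume.restrict (Ioi a))) (hv' : MemLp v' 2 (volume.restrict (Ioi a)))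
    (hw : MemLp w 2 (volume.restrict (Ioi a)))
    (heq : ∀ z ∈ Ioi a, w z = ν • (v'' z - k ^ 2 • v z))
    (hbc : -k * ‖v a‖ ^ 2 ≤ ⟪v a, v' a⟫)
    (hlim : Tendsto (fun z => ⟪v z, v' z⟫) atTop (𝓝 0)) :
    ∫ z in Ioi a, ⟪v z, w z⟫ ≤ 0 := by
  have hpt : ∀ z ∈ Ioi a, ⟪v z, w z⟫ = ν * (⟪v z, v'' z⟫ - k ^ 2 * ‖v z‖ ^ 2) := fun z hz => by
    rw [heq z hz, real_inner_smul_right, inner_sub_right, real_inner_smul_right,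
      real_inner_self_eq_norm_sq]
  have hv'' : IntegrableOn (fun z => ⟪v z, v'' z⟫) (Ioi a) := by
    refine IntegrableOn.congr_fun (((hv.integrable_inner hw).const_mul ν⁻¹).add
      (hv.integrable_sq_norm.const_mul (k ^ 2))) (fun z hz => ?_) measurableSet_Ioi
    rw [Pi.add_apply, hpt z hz]
    field_simp
    ring
  have htrace := mul_sq_norm_le_integral_Ioi k hd hv hv'
  calc ∫ z in Ioi a, ⟪v z, w z⟫
      = ν * ((∫ z in Ioi a, ⟪v z, v'' z⟫) - k ^ 2 * ∫ z in Ioi a, ‖v z‖ ^ 2) := by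
        rw [setIntegral_congr_fun measurableSet_Ioi hpt, integral_const_mul,
          integral_sub hv'' (hv.integrable_sq_norm.const_mul _), integral_const_mul]
    _ ≤ 0 := by
        rw [integral_Ioi_inner_deriv_deriv hd hd' hv' hv'' hlim]
        exact mul_nonpos_of_nonneg_of_nonpos hν.le (by linarith)

end HalfLine

section Energy

variable {E : Type*} [NormedAddCommGroup E]
  {α : Type*} [MeasurableSpace α] {μ : Measure α} {u u' : ℝ → α → E} {g : α → ℝ} {s : Set ℝ}

theorem continuousOn_integral_sq_norm (hmeas : ∀ t ∈ s, AEStronglyMeasurable (u t) μ)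
    (hbound : ∀ᵐ x ∂μ, ∀ t ∈ s, ‖u t x‖ ≤ g x) (hg : Integrable (fun x => g x ^ 2) μ)
    (hcont : ∀ᵐ x ∂μ, ContinuousOn (fun t => u t x) s) :
    ContinuousOn (fun t => ∫ x, ‖u t x‖ ^ 2 ∂μ) s := fun t ht =>
  continuousWithinAt_of_dominated
    (eventually_nhdsWithin_of_forall fun r hr => (hmeas r hr).norm.pow 2)
    (eventually_nhdsWithin_of_forall fun r hr => hbound.mono fun x hx => by
      rw [norm_pow, norm_norm]; exact pow_le_pow_left₀ (norm_nonneg _) (hx r hr) 2)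
    hg (hcont.mono fun x hx => ((hx t ht).norm.pow 2))

theorem hasDerivAt_integral_sq_norm [InnerProductSpace ℝ E] {t₀ : ℝ} (hs : s ∈ 𝓝 t₀)
    (hmeas : ∀ t ∈ s, AEStronglyMeasurable (u t) μ) (hmeas' : AEStronglyMeasurable (u' t₀) μ)
    (hbound : ∀ᵐ x ∂μ, ∀ t ∈ s, ‖u t x‖ ≤ g x) (hbound' : ∀ᵐ x ∂μ, ∀ t ∈ s, ‖u' t x‖ ≤ g x)
    (hg : Integrable (fun x => g x ^ 2) μ)
    (hderiv : ∀ᵐ x ∂μ, ∀ t ∈ s, HasDerivAt (fun t => u t x) (u' t x) t) :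
    HasDerivAt (fun t => ∫ x, ‖u t x‖ ^ 2 ∂μ) (∫ x, 2 * ⟪u t₀ x, u' t₀ x⟫ ∂μ) t₀ := by
  have hint : Integrable (fun x => ‖u t₀ x‖ ^ 2) μ :=
    (memLp_two_of_norm_le (hmeas t₀ (mem_of_mem_nhds hs)) hg
      (hbound.mono fun x hx => hx t₀ (mem_of_mem_nhds hs))).integrable_sq_norm
  refine (hasDerivAt_integral_of_dominated_loc_of_deriv_le (bound := fun x => 2 * g x ^ 2) hs
    (eventually_of_mem hs fun t ht => (hmeas t ht).norm.pow 2) hint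
    (((hmeas t₀ (mem_of_mem_nhds hs)).inner hmeas').const_mul 2) ?_ (hg.const_mul 2)
    (hderiv.mono fun x hx t ht => (hx t ht).norm_sq)).2
  filter_upwards [hbound, hbound'] with x hx hx' t ht
  calc ‖2 * ⟪u t x, u' t x⟫‖ ≤ 2 * (‖u t x‖ * ‖u' t x‖) := by
        rw [norm_mul, Real.norm_two]; gcongr; exact norm_inner_le_norm _ _
    _ ≤ 2 * g x ^ 2 := by
        rw [sq]; gcongr
        · exact (norm_nonneg _).trans (hx t ht)
        · exact hx t ht
        · exact hx' t ht

end Energy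

theorem eqOn_zero_of_integral_Ioi_sq_norm_eq_zero {E : Type*} [NormedAddCommGroup E] {a : ℝ}
    {v : ℝ → E} (hv : ContinuousOn v (Ici a))
    (hint : IntegrableOn (fun z => ‖v z‖ ^ 2) (Ioi a))
    (h : ∫ z in Ioi a, ‖v z‖ ^ 2 = 0) : EqOn v 0 (Ici a) := by
  have hae : v =ᵐ[volume.restrict (Ioi a)] 0 := by
    filter_upwards [(setIntegral_eq_zero_iff_of_nonneg_ae
      (ae_of_all _ fun z => by positivity) hint).mp h] with z hz
    simpa using hz
  refine EqOn.of_subset_closure ?_ hv continuousOn_const Ioi_subset_Ici_self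
    (closure_Ioi a).superset
  exact Measure.eqOn_open_of_ae_eq hae isOpen_Ioi (hv.mono Ioi_subset_Ici_self) continuousOn_const

theorem eq_zero_of_heat_halfLine {E : Type*} [NormedAddCommGroup E] [InnerProductSpace ℝ E]
    {ν k T : ℝ} (hν : 0 < ν) {u ut uz uzz : ℝ → ℝ → E} {g : ℝ → ℝ}
    (hcont : ContinuousOn (Function.uncurry u) (Icc 0 T ×ˢ Ici 0))
    (hdt : ∀ t ∈ Ioc 0 T, ∀ z ∈ Ici (0 : ℝ),
      HasDerivWithinAt (fun s => u s z) (ut t z) (Icc 0 T) t)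
    (hdz : ∀ t ∈ Ioc 0 T, ∀ z ∈ Ici (0 : ℝ), HasDerivWithinAt (u t) (uz t z) (Ici 0) z)
    (hdzz : ∀ t ∈ Ioc 0 T, ∀ z ∈ Ici (0 : ℝ), HasDerivWithinAt (uz t) (uzz t z) (Ici 0) z)
    (hct : ContinuousOn (Function.uncurry ut) (Ioc 0 T ×ˢ Ici 0))
    (heq : ∀ t ∈ Ioc 0 T, ∀ z ∈ Ioi (0 : ℝ), ut t z = ν • (uzz t z - k ^ 2 • u t z))
    (hbc : ∀ t ∈ Ioc 0 T, -k * ‖u t 0‖ ^ 2 ≤ ⟪u t 0, uz t 0⟫)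
    (hinit : ∀ z ∈ Ici (0 : ℝ), u 0 z = 0)
    (hg : IntegrableOn (fun z => g z ^ 2) (Ioi 0))
    (hb : ∀ t ∈ Icc 0 T, ∀ z ∈ Ici (0 : ℝ), ‖u t z‖ ≤ g z)
    (hbt : ∀ t ∈ Ioc 0 T, ∀ z ∈ Ici (0 : ℝ), ‖ut t z‖ ≤ g z)
    (hbz : ∀ t ∈ Ioc 0 T, IntegrableOn (fun z => ‖uz t z‖ ^ 2) (Ioi 0))
    (hlim : ∀ t ∈ Ioc 0 T, Tendsto (fun z => ⟪u t z, uz t z⟫) atTop (𝓝 0)) :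
    ∀ t ∈ Icc 0 T, ∀ z ∈ Ici (0 : ℝ), u t z = 0 := by
  set μ := volume.restrict (Ioi (0 : ℝ))
  have hmeas (t : ℝ) (ht : t ∈ Icc 0 T) : AEStronglyMeasurable (u t) μ :=
    ((hcont.uncurry_left t ht).mono Ioi_subset_Ici_self).aestronglyMeasurable measurableSet_Ioi
  have hL2 (t : ℝ) (ht : t ∈ Icc 0 T) : MemLp (u t) 2 μ :=
    memLp_two_of_norm_le (hmeas t ht) hg (ae_restrict_of_forall_mem measurableSet_Ioi
      fun z hz => hb t ht z (Ioi_subset_Ici_self hz))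
  have hbound : ∀ᵐ z ∂μ, ∀ t ∈ Icc 0 T, ‖u t z‖ ≤ g z :=
    ae_restrict_of_forall_mem measurableSet_Ioi fun z hz t ht => hb t ht z (Ioi_subset_Ici_self hz)
  have hE_cont := continuousOn_integral_sq_norm hmeas hbound hg
    (ae_restrict_of_forall_mem measurableSet_Ioi fun z hz =>
      hcont.uncurry_right z (Ioi_subset_Ici_self hz))
  have hmeas_t (t : ℝ) (ht : t ∈ Ioc 0 T) : AEStronglyMeasurable (ut t) μ :=
    ((hct.uncurry_left t ht).mono Ioi_subset_Ici_self).aestronglyMeasurable measurableSet_Ioi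
  have hE_deriv (t : ℝ) (ht : t ∈ Ioo 0 T) : HasDerivAt (fun t => ∫ z, ‖u t z‖ ^ 2 ∂μ)
      (∫ z, 2 * ⟪u t z, ut t z⟫ ∂μ) t :=
    hasDerivAt_integral_sq_norm (Ioo_mem_nhds ht.1 ht.2)
      (fun t ht => hmeas t (Ioo_subset_Icc_self ht)) (hmeas_t t (Ioo_subset_Ioc_self ht))
      (hbound.mono fun z hz t ht => hz t (Ioo_subset_Icc_self ht))
      (ae_restrict_of_forall_mem measurableSet_Ioi fun z hz t ht =>
        hbt t (Ioo_subset_Ioc_self ht) z (Ioi_subset_Ici_self hz)) hg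
      (ae_restrict_of_forall_mem measurableSet_Ioi fun z hz t ht =>
        (hdt t (Ioo_subset_Ioc_self ht) z (Ioi_subset_Ici_self hz)).hasDerivAt
          (Icc_mem_nhds ht.1 ht.2))
  have hE_deriv_nonpos (t : ℝ) (ht : t ∈ Ioo 0 T) : ∫ z, 2 * ⟪u t z, ut t z⟫ ∂μ ≤ 0 := by
    have ht' := Ioo_subset_Ioc_self ht
    have hz_cont : ContinuousOn (uz t) (Ici 0) := fun z hz => (hdzz t ht' z hz).continuousWithinAt
    have hz_L2 : MemLp (uz t) 2 μ := (memLp_two_iff_integrable_sq_norm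
      ((hz_cont.mono Ioi_subset_Ici_self).aestronglyMeasurable measurableSet_Ioi)).mpr (hbz t ht')
    have ht_L2 : MemLp (ut t) 2 μ := memLp_two_of_norm_le (hmeas_t t ht') hg
      (ae_restrict_of_forall_mem measurableSet_Ioi fun z hz => hbt t ht' z (Ioi_subset_Ici_self hz))
    rw [integral_const_mul]
    exact mul_nonpos_of_nonneg_of_nonpos zero_le_two <| integral_Ioi_inner_nonpos_of_heat hν
      (hdz t ht') (hdzz t ht') (hL2 t (Ioo_subset_Icc_self ht)) hz_L2 ht_L2 (heq t ht')
      (hbc t ht') (hlim t ht')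
  have hE_anti : AntitoneOn (fun t => ∫ z, ‖u t z‖ ^ 2 ∂μ) (Icc 0 T) := by
    refine antitoneOn_of_hasDerivWithinAt_nonpos (f' := fun t => ∫ z, 2 * ⟪u t z, ut t z⟫ ∂μ)
      (convex_Icc 0 T) hE_cont ?_ ?_ <;>
      rw [interior_Icc]
    · exact fun t ht => (hE_deriv t ht).hasDerivWithinAt
    · exact hE_deriv_nonpos
  have hE_init : ∫ z, ‖u 0 z‖ ^ 2 ∂μ = 0 := by
    rw [setIntegral_congr_fun measurableSet_Ioi fun z hz => by
      rw [hinit z (Ioi_subset_Ici_self hz), norm_zero, zero_pow two_ne_zero], integral_zero]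
  have hE_zero (t : ℝ) (ht : t ∈ Icc 0 T) : ∫ z, ‖u t z‖ ^ 2 ∂μ = 0 :=
    le_antisymm (hE_init ▸ hE_anti (left_mem_Icc.mpr (ht.1.trans ht.2)) ht ht.1)
      (integral_nonneg fun z => by positivity)
  intro t ht
  exact eqOn_zero_of_integral_Ioi_sq_norm_eq_zero (hcont.uncurry_left t ht)
    (hL2 t ht).integrable_sq_norm (hE_zero t ht)

theorem HasDerivWithinAt.toLp {ι F : Type*} [Fintype ι] [NormedAddCommGroup F] [NormedSpace ℝ F]
    {f : ℝ → ι → F} {f' : ι → F} {s : Set ℝ} {x : ℝ} (h : HasDerivWithinAt f f' s x) :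
    HasDerivWithinAt (fun y => WithLp.toLp 2 (f y)) (WithLp.toLp 2 f') s x :=
  (PiLp.continuousLinearEquiv 2 ℝ (fun _ : ι => F)).symm.hasFDerivAt.comp_hasDerivWithinAt x h

theorem norm_toLp_fin_two (a : Fin 2 → ℂ) :
    ‖(WithLp.toLp 2 a : EuclideanSpace ℂ (Fin 2))‖ = √(‖a 0‖ ^ 2 + ‖a 1‖ ^ 2) := by
  simp [EuclideanSpace.norm_eq, Fin.sum_univ_two]

theorem real_inner_toLp_fin_two (a b : Fin 2 → ℂ) :
    ⟪(WithLp.toLp 2 a : EuclideanSpace ℂ (Fin 2)), WithLp.toLp 2 b⟫ =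
      (b 0 * starRingEnd ℂ (a 0) + b 1 * starRingEnd ℂ (a 1)).re := by
  simp [real_inner_eq_re_inner ℂ, PiLp.inner_apply, Fin.sum_univ_two, mul_comm]

theorem neg_mul_sq_norm_le_real_inner_of_vorticity_bc {ξ₁ ξ₂ : ℝ} {a b : Fin 2 → ℂ}
    (h : -(a + ((√(ξ₁ ^ 2 + ξ₂ ^ 2) : ℝ) : ℂ) • b)
        + (((√(ξ₁ ^ 2 + ξ₂ ^ 2) : ℝ) : ℂ))⁻¹ •
          (((ξ₁ : ℂ) * b 0 + (ξ₂ : ℂ) * b 1) • ![(ξ₁ : ℂ), (ξ₂ : ℂ)]) = 0) :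
    -√(ξ₁ ^ 2 + ξ₂ ^ 2) * ‖(WithLp.toLp 2 b : EuclideanSpace ℂ (Fin 2))‖ ^ 2 ≤
      ⟪(WithLp.toLp 2 b : EuclideanSpace ℂ (Fin 2)), WithLp.toLp 2 a⟫ := by
  set k := √(ξ₁ ^ 2 + ξ₂ ^ 2)
  set s := (ξ₁ : ℂ) * b 0 + (ξ₂ : ℂ) * b 1
  have h0 : a 0 = (k : ℂ)⁻¹ * (s * ξ₁) - k * b 0 := by
    have := congrFun h 0
    simp only [Pi.add_apply, Pi.neg_apply, Pi.smul_apply, smul_eq_mul, Matrix.cons_val_zero,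
      Pi.zero_apply] at this
    linear_combination -this
  have h1 : a 1 = (k : ℂ)⁻¹ * (s * ξ₂) - k * b 1 := by
    have := congrFun h 1
    simp only [Pi.add_apply, Pi.neg_apply, Pi.smul_apply, smul_eq_mul, Matrix.cons_val_one,
      Matrix.cons_val_zero, Pi.zero_apply] at this
    linear_combination -this
  -- the tangential part of the condition contributes `|ξ · b|² / |ξ| ≥ 0`
  have hid : a 0 * starRingEnd ℂ (b 0) + a 1 * starRingEnd ℂ (b 1) =
      (k : ℂ)⁻¹ * (s * starRingEnd ℂ s)
        - k * (b 0 * starRingEnd ℂ (b 0) + b 1 * starRingEnd ℂ (b 1)) := by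
    rw [h0, h1]
    simp only [s, map_add, map_mul, Complex.conj_ofReal]
    ring
  rw [real_inner_toLp_fin_two, hid, norm_toLp_fin_two, Real.sq_sqrt (by positivity)]
  simp only [Complex.mul_conj, Complex.sub_re, Complex.mul_re, ← Complex.ofReal_inv,
    Complex.ofReal_re, Complex.ofReal_im, mul_zero, sub_zero, ← Complex.ofReal_add,
    Complex.sq_norm]
  have : 0 ≤ k⁻¹ * Complex.normSq s :=
    mul_nonneg (inv_nonneg.mpr (Real.sqrt_nonneg _)) (Complex.normSq_nonneg s)
  linarith

theorem stokes_vorticity_uniqueness_general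
    (ν : ℝ) (hν : 0 < ν) (ξ₁ ξ₂ : ℝ)
    (T : ℝ)
    (ω ωt ωz ωzz : ℝ → ℝ → Fin 2 → ℂ)
    (hcont : ContinuousOn (fun p : ℝ × ℝ => ω p.1 p.2) (Icc 0 T ×ˢ Ici 0))
    (hdt : ∀ t ∈ Ioc 0 T, ∀ z ∈ Ici (0 : ℝ),
      HasDerivWithinAt (fun s => ω s z) (ωt t z) (Icc 0 T) t)
    (hdz : ∀ t ∈ Ioc 0 T, ∀ z ∈ Ici (0 : ℝ),
      HasDerivWithinAt (fun w => ω t w) (ωz t z) (Ici 0) z)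
    (hdzz : ∀ t ∈ Ioc 0 T, ∀ z ∈ Ici (0 : ℝ),
      HasDerivWithinAt (fun w => ωz t w) (ωzz t z) (Ici 0) z)
    (hct : ContinuousOn (fun p : ℝ × ℝ => ωt p.1 p.2) (Ioc 0 T ×ˢ Ici 0))
    -- (i) the heat equation ∂_t ω = ν (∂_z² ω - |ξ|² ω)
    (heq : ∀ t ∈ Ioc 0 T, ∀ z ∈ Ioi (0 : ℝ),
      ωt t z = (ν : ℂ) • (ωzz t z - ((ξ₁ ^ 2 + ξ₂ ^ 2 : ℝ) : ℂ) • ω t z))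
    -- (ii) the vorticity boundary condition
    (hbc : ∀ t ∈ Ioc 0 T,
      -(ωz t 0 + ((Real.sqrt (ξ₁ ^ 2 + ξ₂ ^ 2) : ℝ) : ℂ) • ω t 0)
        + (((Real.sqrt (ξ₁ ^ 2 + ξ₂ ^ 2) : ℝ) : ℂ))⁻¹ •
          (((ξ₁ : ℂ) * ω t 0 0 + (ξ₂ : ℂ) * ω t 0 1) • ![(ξ₁ : ℂ), (ξ₂ : ℂ)]) = 0)
    -- (iii) zero initial data
    (hinit : ∀ z ∈ Ici (0 : ℝ), ω 0 z = 0)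
    -- (iv) integrability and decay
    (g : ℝ → ℝ)
    (hg : IntegrableOn (fun z => g z ^ 2) (Ioi 0))
    (hb1 : ∀ t ∈ Icc 0 T, ∀ z ∈ Ici (0 : ℝ),
      Real.sqrt (‖ω t z 0‖ ^ 2 + ‖ω t z 1‖ ^ 2) ≤ g z)
    (hb2 : ∀ t ∈ Ioc 0 T, ∀ z ∈ Ici (0 : ℝ),
      Real.sqrt (‖ωt t z 0‖ ^ 2 + ‖ωt t z 1‖ ^ 2) ≤ g z)
    (hb3 : ∀ t ∈ Ioc 0 T,
      IntegrableOn (fun z => ‖ωz t z 0‖ ^ 2 + ‖ωz t z 1‖ ^ 2) (Ioi 0))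
    (hb4 : ∀ t ∈ Ioc 0 T,
      Tendsto (fun z => ωz t z 0 * (starRingEnd ℂ) (ω t z 0)
        + ωz t z 1 * (starRingEnd ℂ) (ω t z 1)) atTop (nhds 0)) :
    ∀ t ∈ Icc 0 T, ∀ z ∈ Ici (0 : ℝ), ω t z = 0 := by
  set k := √(ξ₁ ^ 2 + ξ₂ ^ 2)
  have hk : ξ₁ ^ 2 + ξ₂ ^ 2 = k ^ 2 := (Real.sq_sqrt (by positivity)).symm
  have hsq (a : Fin 2 → ℂ) : ‖(WithLp.toLp 2 a : EuclideanSpace ℂ (Fin 2))‖ ^ 2 =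
      ‖a 0‖ ^ 2 + ‖a 1‖ ^ 2 := by
    rw [norm_toLp_fin_two, Real.sq_sqrt (by positivity)]
  have key := eq_zero_of_heat_halfLine (E := EuclideanSpace ℂ (Fin 2)) (k := k) hν
    (u := fun t z => WithLp.toLp 2 (ω t z)) (ut := fun t z => WithLp.toLp 2 (ωt t z))
    (uz := fun t z => WithLp.toLp 2 (ωz t z)) (uzz := fun t z => WithLp.toLp 2 (ωzz t z))
    ((PiLp.continuous_toLp 2 _).comp_continuousOn hcont)
    (fun t ht z hz => (hdt t ht z hz).toLp) (fun t ht z hz => (hdz t ht z hz).toLp)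
    (fun t ht z hz => (hdzz t ht z hz).toLp)
    ((PiLp.continuous_toLp 2 _).comp_continuousOn hct)
    (fun t ht z hz => by
      rw [heq t ht z hz, hk]; simp only [WithLp.toLp_smul, WithLp.toLp_sub, Complex.coe_smul])
    (fun t ht => neg_mul_sq_norm_le_real_inner_of_vorticity_bc (hbc t ht))
    (fun z hz => by simp [hinit z hz]) hg
    (fun t ht z hz => by simpa [norm_toLp_fin_two] using hb1 t ht z hz)
    (fun t ht z hz => by simpa [norm_toLp_fin_two] using hb2 t ht z hz)
    (fun t ht => by simpa only [hsq] using hb3 t ht)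
    (fun t ht => by simpa [real_inner_toLp_fin_two, Function.comp_def] using
      (Complex.continuous_re.tendsto 0).comp (hb4 t ht))
  intro t ht z hz
  simpa using key t ht z hz

/-- Uniqueness for the homogeneous Stokes vorticity system at fixed tangential frequency ξ
on the half-line: a solution of the heat equation ∂_t ω = ν(∂_z² - |ξ|²)ω with the vorticity
boundary condition, zero initial data, and suitable integrability vanishes identically. -/
theorem stokes_vorticity_uniqueness
    (ν : ℝ) (hν : 0 < ν) (ξ₁ ξ₂ : ℝ) (hξ : (ξ₁, ξ₂) ≠ (0, 0))
    (T : ℝ) (hT : 0 < T)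
    (ω ωt ωz ωzz : ℝ → ℝ → Fin 2 → ℂ)
    (hcont : ContinuousOn (fun p : ℝ × ℝ => ω p.1 p.2) (Icc 0 T ×ˢ Ici 0))
    (hdt : ∀ t ∈ Ioc 0 T, ∀ z ∈ Ici (0 : ℝ),
      HasDerivWithinAt (fun s => ω s z) (ωt t z) (Icc 0 T) t)
    (hdz : ∀ t ∈ Ioc 0 T, ∀ z ∈ Ici (0 : ℝ),
      HasDerivWithinAt (fun w => ω t w) (ωz t z) (Ici 0) z)
    (hdzz : ∀ t ∈ Ioc 0 T, ∀ z ∈ Ici (0 : ℝ),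
      HasDerivWithinAt (fun w => ωz t w) (ωzz t z) (Ici 0) z)
    (hct : ContinuousOn (fun p : ℝ × ℝ => ωt p.1 p.2) (Ioc 0 T ×ˢ Ici 0))
    (hcz : ContinuousOn (fun p : ℝ × ℝ => ωz p.1 p.2) (Ioc 0 T ×ˢ Ici 0))
    (hczz : ContinuousOn (fun p : ℝ × ℝ => ωzz p.1 p.2) (Ioc 0 T ×ˢ Ici 0))
    -- (i) the heat equation ∂_t ω = ν (∂_z² ω - |ξ|² ω)
    (heq : ∀ t ∈ Ioc 0 T, ∀ z ∈ Ioi (0 : ℝ),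
      ωt t z = (ν : ℂ) • (ωzz t z - ((ξ₁ ^ 2 + ξ₂ ^ 2 : ℝ) : ℂ) • ω t z))
    -- (ii) the vorticity boundary condition
    (hbc : ∀ t ∈ Ioc 0 T,
      -(ωz t 0 + ((Real.sqrt (ξ₁ ^ 2 + ξ₂ ^ 2) : ℝ) : ℂ) • ω t 0)
        + (((Real.sqrt (ξ₁ ^ 2 + ξ₂ ^ 2) : ℝ) : ℂ))⁻¹ •
          (((ξ₁ : ℂ) * ω t 0 0 + (ξ₂ : ℂ) * ω t 0 1) • ![(ξ₁ : ℂ), (ξ₂ : ℂ)]) = 0)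
    -- (iii) zero initial data
    (hinit : ∀ z ∈ Ici (0 : ℝ), ω 0 z = 0)
    -- (iv) integrability and decay
    (g : ℝ → ℝ)
    (hg : IntegrableOn (fun z => g z ^ 2) (Ioi 0))
    (hb1 : ∀ t ∈ Icc 0 T, ∀ z ∈ Ici (0 : ℝ),
      Real.sqrt (‖ω t z 0‖ ^ 2 + ‖ω t z 1‖ ^ 2) ≤ g z)
    (hb2 : ∀ t ∈ Ioc 0 T, ∀ z ∈ Ici (0 : ℝ),
      Real.sqrt (‖ωt t z 0‖ ^ 2 + ‖ωt t z 1‖ ^ 2) ≤ g z)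
    (hb3 : ∀ t ∈ Ioc 0 T,
      IntegrableOn (fun z => ‖ωz t z 0‖ ^ 2 + ‖ωz t z 1‖ ^ 2) (Ioi 0))
    (hb4 : ∀ t ∈ Ioc 0 T,
      Tendsto (fun z => ωz t z 0 * (starRingEnd ℂ) (ω t z 0)
        + ωz t z 1 * (starRingEnd ℂ) (ω t z 1)) atTop (nhds 0)) :
    ∀ t ∈ Icc 0 T, ∀ z ∈ Ici (0 : ℝ), ω t z = 0 :=
  stokes_vorticity_uniqueness_general ν hν ξ₁ ξ₂ T ω ωt ωz ωzz hcont hdt hdz hdzz hct heq hbc hinit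
    g hg hb1 hb2 hb3 hb4
end

section
/- There is a universal constant C > 0 with the following property. Let ν > 0, let ξ ∈ ℝ² with ν|ξ|² ≥ 1, let t > 0 and y, z ≥ 0, and set a := (y+z)/(2νt). Let θ := 1/2 if a/|ξ| ∈ (1/2, 3/2) and θ := 1 otherwise. For b ∈ ℝ define μ(b) := θ a + i b and λ(b) := ν μ(b)² − ν|ξ|² (then μ(b) ≠ |ξ| for every b ∈ ℝ). Then | ∫_ℝ e^{λ(b) t} e^{−μ(b)(y+z)} · (2 i |ξ| / (μ(b) − |ξ|)) db | ≤ C (ν t)^{−1/2} e^{−ν|ξ|² t} e^{−(y+z)²/(8 ν t)}. -/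
open MeasureTheory Set Complex

/-!
Along the contour `μ(b) = θa + ib` one has `Re(λ t - μ (y+z)) = -ν t b² - ν|ξ|² t + ν t a² (θ² - 2θ)`,
because `y + z = 2νta`; for `θ ∈ [1/2, 1]` the last term is at most `-νta²/2 = -(y+z)²/(8νt)`.
The choice of `θ` keeps `Re μ = θa` at distance at least `|ξ|/4` from `|ξ|`, so the rational factor
`2i|ξ|/(μ - |ξ|)` is bounded by `8`. What is left is the Gaussian integral
`∫ e^{-νt b²} db = √(π/(νt))`.
-/

lemma norm_integral_le_of_norm_le_gaussian {f : ℝ → ℂ} {K c : ℝ} (hc : 0 < c)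
    (hf : ∀ b, ‖f b‖ ≤ K * Real.exp (-c * b ^ 2)) :
    ‖∫ b, f b‖ ≤ K * Real.sqrt (Real.pi / c) :=
  calc ‖∫ b, f b‖ ≤ ∫ b, K * Real.exp (-c * b ^ 2) :=
        norm_integral_le_of_norm_le ((integrable_exp_neg_mul_sq hc).const_mul K) (.of_forall hf)
    _ = K * Real.sqrt (Real.pi / c) := by rw [integral_const_mul, integral_gaussian]

lemma mem_Icc_and_quarter_le_abs_sub_of_shift {a r θ : ℝ} (hr : 0 < r)
    (h₁ : 1 / 2 < a / r ∧ a / r < 3 / 2 → θ = 1 / 2)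
    (h₂ : ¬(1 / 2 < a / r ∧ a / r < 3 / 2) → θ = 1) :
    θ ∈ Icc (1 / 2 : ℝ) 1 ∧ r / 4 ≤ |θ * a - r| := by
  by_cases h : 1 / 2 < a / r ∧ a / r < 3 / 2
  · obtain rfl := h₁ h
    rw [lt_div_iff₀ hr, div_lt_iff₀ hr] at h
    exact ⟨by norm_num, le_abs.2 (.inr (by linarith))⟩
  · obtain rfl := h₂ h
    rw [lt_div_iff₀ hr, div_lt_iff₀ hr, not_and_or, not_lt, not_lt] at h
    refine ⟨by norm_num, le_abs.2 ?_⟩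
    rcases h with h | h
    · exact .inr (by linarith)
    · exact .inl (by linarith)

lemma norm_exp_mul_exp_contour (ν q t c b s : ℝ) :
    ‖exp (((ν : ℂ) * ((c : ℂ) + b * I) ^ 2 - ν * (q : ℂ)) * t) * exp (-((c : ℂ) + b * I) * s)‖
      = Real.exp (ν * t * (c ^ 2 - b ^ 2 - q) - c * s) := by
  rw [norm_mul, norm_exp, norm_exp, ← Real.exp_add]
  congr 1
  simp only [mul_re, mul_im, sub_re, sub_im, neg_re, neg_im, add_re, add_im, ofReal_re,
    ofReal_im, I_re, I_im, sq]
  ring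

lemma contour_exponent_le {ν t a θ b q : ℝ} (hνt : 0 < ν * t) (hθ : θ ∈ Icc (1 / 2 : ℝ) 1) :
    ν * t * ((θ * a) ^ 2 - b ^ 2 - q) - θ * a * (2 * ν * t * a)
      ≤ -(ν * q * t) + -(2 * ν * t * a) ^ 2 / (8 * ν * t) + -(ν * t) * b ^ 2 := by
  have hsq : (2 * ν * t * a) ^ 2 / (8 * ν * t) = ν * t * a ^ 2 / 2 := by
    rw [div_eq_iff (show 0 < 8 * ν * t by linarith).ne']
    ring
  have hθ' : θ ^ 2 - 2 * θ ≤ -1 / 2 := by nlinarith [hθ.1, hθ.2]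
  have := mul_le_mul_of_nonneg_left hθ' (mul_nonneg hνt.le (sq_nonneg a))
  rw [neg_div, hsq]
  nlinarith

lemma norm_contour_integrand_le {ν t q r a θ s b : ℝ} (hνt : 0 < ν * t)
    (hθ : θ ∈ Icc (1 / 2 : ℝ) 1) (hr : 0 ≤ r) (hsep : r / 4 ≤ |θ * a - r|)
    (ha : a = s / (2 * ν * t)) :
    ‖exp (((ν : ℂ) * ((θ * a : ℝ) + b * I) ^ 2 - ν * (q : ℂ)) * t) *
        exp (-((θ * a : ℝ) + b * I) * s) * (2 * I * r / (((θ * a : ℝ) + b * I) - r))‖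
      ≤ 8 * Real.exp (-(ν * q * t)) * Real.exp (-s ^ 2 / (8 * ν * t)) *
          Real.exp (-(ν * t) * b ^ 2) := by
  obtain rfl : s = 2 * ν * t * a := by
    rw [ha, mul_div_cancel₀ _ (show 0 < 2 * ν * t by linarith).ne']
  have hfactor : ‖2 * I * r / (((θ * a : ℝ) + b * I) - r)‖ ≤ 8 := by
    have hre : r / 4 ≤ ‖((θ * a : ℝ) + b * I) - r‖ := hsep.trans <| by
      simpa using abs_re_le_norm (((θ * a : ℝ) + b * I) - r)
    rw [norm_div, norm_mul, norm_mul, Complex.norm_two, norm_I, norm_real,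
      Real.norm_of_nonneg hr]
    exact div_le_of_le_mul₀ (norm_nonneg _) (by norm_num) (by linarith)
  rw [norm_mul, norm_exp_mul_exp_contour]
  refine (mul_le_mul (Real.exp_le_exp.2 (contour_exponent_le hνt hθ)) hfactor (norm_nonneg _)
    (Real.exp_pos _).le).trans_eq ?_
  rw [Real.exp_add, Real.exp_add]
  ring

/-- Gaussian bound for the residual part of the time-dependent Green's function of the
Stokes vorticity problem in the regime ν|ξ|² ≥ 1: the contour integral along the parabola
parametrized by b ↦ μ(b) = θa + ib satisfies a heat-kernel-type upper bound. -/
theorem residual_kernel_contour_bound :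
    ∃ C > (0 : ℝ),
      ∀ (ν ξ₁ ξ₂ t y z : ℝ), 0 < ν → 1 ≤ ν * (ξ₁ ^ 2 + ξ₂ ^ 2) →
        0 < t → 0 ≤ y → 0 ≤ z →
      ∀ a : ℝ, a = (y + z) / (2 * ν * t) →
      ∀ θ : ℝ,
        (1 / 2 < a / Real.sqrt (ξ₁ ^ 2 + ξ₂ ^ 2) ∧
          a / Real.sqrt (ξ₁ ^ 2 + ξ₂ ^ 2) < 3 / 2 → θ = 1 / 2) →
        (¬(1 / 2 < a / Real.sqrt (ξ₁ ^ 2 + ξ₂ ^ 2) ∧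
          a / Real.sqrt (ξ₁ ^ 2 + ξ₂ ^ 2) < 3 / 2) → θ = 1) →
      ∀ μf : ℝ → ℂ, (∀ b, μf b = ((θ * a : ℝ) : ℂ) + (b : ℂ) * Complex.I) →
      ∀ lamf : ℝ → ℂ,
        (∀ b, lamf b = (ν : ℂ) * μf b ^ 2 - (ν : ℂ) * ((ξ₁ ^ 2 + ξ₂ ^ 2 : ℝ) : ℂ)) →
        ‖(∫ b : ℝ,
            Complex.exp (lamf b * (t : ℂ)) * Complex.exp (-μf b * ((y + z : ℝ) : ℂ)) *
              (2 * Complex.I * ((Real.sqrt (ξ₁ ^ 2 + ξ₂ ^ 2) : ℝ) : ℂ) /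
                (μf b - ((Real.sqrt (ξ₁ ^ 2 + ξ₂ ^ 2) : ℝ) : ℂ))))‖
          ≤ C / Real.sqrt (ν * t) * Real.exp (-(ν * (ξ₁ ^ 2 + ξ₂ ^ 2) * t)) *
              Real.exp (-(y + z) ^ 2 / (8 * ν * t)) := by
  refine ⟨8 * Real.sqrt Real.pi, by positivity, ?_⟩
  intro ν ξ₁ ξ₂ t y z hν hνq ht _ _ a ha θ hθ₁ hθ₂ μf hμ lamf hlam
  have hq : 0 < ξ₁ ^ 2 + ξ₂ ^ 2 := pos_of_mul_pos_right (one_pos.trans_le hνq) hν.le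
  have hr := Real.sqrt_pos.2 hq
  obtain ⟨hθ, hsep⟩ := mem_Icc_and_quarter_le_abs_sub_of_shift hr hθ₁ hθ₂
  have hνt := mul_pos hν ht
  refine (norm_integral_le_of_norm_le_gaussian hνt fun b => by
    simp only [hlam, hμ]
    exact norm_contour_integrand_le hνt hθ hr.le hsep ha).trans_eq ?_
  rw [Real.sqrt_div Real.pi_pos.le]
  ring
end

section
/- Let ν > 0, let ξ = (ξ₁, ξ₂) ∈ ℝ² be nonzero, and let λ ∈ ℂ. Let u, v : [0,∞) → ℂ² be twice continuously differentiable with compact support, and suppose both satisfy the boundary condition −(φ'(0) + |ξ| φ(0)) + |ξ|⁻¹ (ξ₁ φ₁(0) + ξ₂ φ₂(0)) (ξ₁, ξ₂) = 0 (with φ = u and φ = v respectively). Then ∫₀^∞ ( λ u(z) − ν u''(z) + ν|ξ|² u(z) ) · v(z) dz = ∫₀^∞ u(z) · ( λ v(z) − ν v''(z) + ν|ξ|² v(z) ) dz, where a · b := a₁b₁ + a₂b₂ denotes the bilinear dot product (no conjugation). -/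
/-!
The two integrands differ by `-ν G` with `G = u''·v - u·v''`, and `G` is the derivative of
the Wronskian `W = u'·v - u·v'`. As `u` has compact support, `∫₀^∞ G = -W(0)`. The boundary
condition reads `φ'(0) = M φ(0)` with `M = -|ξ| + |ξ|⁻¹ ξ ξᵀ` symmetric, so
`W(0) = M u(0)·v(0) - u(0)·M v(0) = 0`.
-/

open MeasureTheory Set Complex

noncomputable section

/-- The bilinear dot product on ℂ², without conjugation. -/
def bdot (a b : Fin 2 → ℂ) : ℂ := a 0 * b 0 + a 1 * b 1

open Filter Topology Function

section Support

variable {𝕜 F : Type*} [NontriviallyNormedField 𝕜] [NormedAddCommGroup F] [NormedSpace 𝕜 F]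
  {f : 𝕜 → F} {s : Set 𝕜}

theorem support_derivWithin_subset : support (derivWithin f s) ⊆ tsupport f := by
  intro x hx
  by_contra hxf
  have hf : f =ᶠ[𝓝 x] fun _ ↦ 0 := notMem_tsupport_iff_eventuallyEq.mp hxf
  exact hx <| ((hf.filter_mono nhdsWithin_le_nhds).derivWithin_eq hf.eq_of_nhds).trans (by simp)

theorem HasCompactSupport.derivWithin (hf : HasCompactSupport f) :
    HasCompactSupport (derivWithin f s) :=
  hf.mono' support_derivWithin_subset

end Support

section HalfLine

variable {E : Type*} [NormedAddCommGroup E] {f : ℝ → E} {a : ℝ}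

theorem HasCompactSupport.integrableOn_Ioi (hf : HasCompactSupport f)
    (hcont : ContinuousOn f (Ici a)) : IntegrableOn f (Ioi a) :=
  ((hcont.mono inter_subset_left).integrableOn_compact (hf.isCompact.inter_left isClosed_Ici))
    |>.of_forall_sdiff_eq_zero measurableSet_Ioi fun _ hx ↦
      image_eq_zero_of_notMem_tsupport fun h ↦ hx.2 ⟨mem_Ici_of_Ioi hx.1, h⟩

theorem HasCompactSupport.tendsto_atTop (hf : HasCompactSupport f) :
    Tendsto f atTop (𝓝 0) :=
  hf.is_zero_at_infty.mono_left atTop_le_cocompact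

theorem ContDiffOn.continuousOn_derivWithin_derivWithin [NormedSpace ℝ E] {s : Set ℝ}
    (hf : ContDiffOn ℝ 2 f s) (hs : UniqueDiffOn ℝ s) :
    ContinuousOn (derivWithin (derivWithin f s) s) s :=
  (hf.derivWithin hs (m := 1) le_rfl).continuousOn_derivWithin hs le_rfl

theorem ContDiffOn.hasDerivAt_derivWithin [NormedSpace ℝ E] {n : WithTop ℕ∞} {s : Set ℝ}
    {x : ℝ} (hf : ContDiffOn ℝ n f s) (hn : n ≠ 0) (hs : s ∈ 𝓝 x) :
    HasDerivAt f (derivWithin f s x) x :=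
  ((hf.differentiableOn hn x (mem_of_mem_nhds hs)).hasDerivWithinAt).hasDerivAt hs

end HalfLine

section Bdot

variable {f g : ℝ → Fin 2 → ℂ}

theorem bdot_comm (a b : Fin 2 → ℂ) : bdot a b = bdot b a := by
  simp only [bdot]; ring

theorem HasDerivAt.bdot {f' g' : Fin 2 → ℂ} {x : ℝ} (hf : HasDerivAt f f' x)
    (hg : HasDerivAt g g' x) :
    HasDerivAt (fun y ↦ bdot (f y) (g y)) (bdot f' (g x) + bdot (f x) g') x := by
  have hfi := hasDerivAt_pi.1 hf
  have hgi := hasDerivAt_pi.1 hg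
  refine (((hfi 0).fun_mul (hgi 0)).fun_add ((hfi 1).fun_mul (hgi 1))).congr_deriv ?_
  simp only [_root_.bdot]; ring

theorem ContinuousOn.bdot {s : Set ℝ} (hf : ContinuousOn f s) (hg : ContinuousOn g s) :
    ContinuousOn (fun y ↦ bdot (f y) (g y)) s := by
  unfold _root_.bdot; fun_prop

theorem HasCompactSupport.bdot_left (hf : HasCompactSupport f) :
    HasCompactSupport (fun y ↦ bdot (f y) (g y)) :=
  hf.mono fun y hy h ↦ hy (by simp [_root_.bdot, h])

end Bdot

section Green

variable {a : ℝ} {u v : ℝ → Fin 2 → ℂ}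

theorem integrableOn_Ioi_bdot_green (hu : ContDiffOn ℝ 2 u (Ici a))
    (hv : ContDiffOn ℝ 2 v (Ici a)) (hucs : HasCompactSupport u) :
    IntegrableOn (fun z ↦ bdot (derivWithin (derivWithin u (Ici a)) (Ici a) z) (v z)
      - bdot (u z) (derivWithin (derivWithin v (Ici a)) (Ici a) z)) (Ioi a) :=
  (hucs.derivWithin.derivWithin.bdot_left.sub hucs.bdot_left).integrableOn_Ioi
    (((hu.continuousOn_derivWithin_derivWithin (uniqueDiffOn_Ici a)).bdot hv.continuousOn).sub
      (hu.continuousOn.bdot (hv.continuousOn_derivWithin_derivWithin (uniqueDiffOn_Ici a))))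

theorem integral_Ioi_bdot_green (hu : ContDiffOn ℝ 2 u (Ici a))
    (hv : ContDiffOn ℝ 2 v (Ici a)) (hucs : HasCompactSupport u) :
    ∫ z in Ioi a, (bdot (derivWithin (derivWithin u (Ici a)) (Ici a) z) (v z)
        - bdot (u z) (derivWithin (derivWithin v (Ici a)) (Ici a) z))
      = bdot (u a) (derivWithin v (Ici a) a) - bdot (derivWithin u (Ici a) a) (v a) := by
  set u' := derivWithin u (Ici a)
  set v' := derivWithin v (Ici a)
  have hu' : ContDiffOn ℝ 1 u' (Ici a) := hu.derivWithin (uniqueDiffOn_Ici a) le_rfl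
  have hv' : ContDiffOn ℝ 1 v' (Ici a) := hv.derivWithin (uniqueDiffOn_Ici a) le_rfl
  have hW_deriv : ∀ z ∈ Ioi a, HasDerivAt (fun y ↦ bdot (u' y) (v y) - bdot (u y) (v' y))
      (bdot (derivWithin u' (Ici a) z) (v z) - bdot (u z) (derivWithin v' (Ici a) z)) z := by
    intro z hz
    have hs : Ici a ∈ 𝓝 z := Ici_mem_nhds hz
    refine (((hu'.hasDerivAt_derivWithin one_ne_zero hs).bdot
      (hv.hasDerivAt_derivWithin two_ne_zero hs)).fun_sub
      ((hu.hasDerivAt_derivWithin two_ne_zero hs).bdot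
        (hv'.hasDerivAt_derivWithin one_ne_zero hs))).congr_deriv ?_
    ring
  have hW_cont : ContinuousOn (fun y ↦ bdot (u' y) (v y) - bdot (u y) (v' y)) (Ici a) :=
    (hu'.continuousOn.bdot hv.continuousOn).sub (hu.continuousOn.bdot hv'.continuousOn)
  have hW_cs : HasCompactSupport (fun y ↦ bdot (u' y) (v y) - bdot (u y) (v' y)) :=
    hucs.derivWithin.bdot_left.sub hucs.bdot_left
  rw [integral_Ioi_of_hasDerivAt_of_tendsto (hW_cont a self_mem_Ici) hW_deriv
    (integrableOn_Ioi_bdot_green hu hv hucs) hW_cs.tendsto_atTop,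
    bdot_comm (u' a), bdot_comm (u a)]
  ring

end Green

theorem bdot_eq_of_boundary_condition {q r a₁ a₂ : ℂ} {p p' w w' : Fin 2 → ℂ}
    (hp : -(p' + q • p) + r • ((a₁ * p 0 + a₂ * p 1) • ![a₁, a₂]) = 0)
    (hw : -(w' + q • w) + r • ((a₁ * w 0 + a₂ * w 1) • ![a₁, a₂]) = 0) :
    bdot p' w = bdot p w' := by
  have hp0 := congrFun hp 0
  have hp1 := congrFun hp 1
  have hw0 := congrFun hw 0
  have hw1 := congrFun hw 1
  simp only [Pi.add_apply, Pi.neg_apply, Pi.smul_apply, Pi.zero_apply, smul_eq_mul,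
    Matrix.cons_val_zero, Matrix.cons_val_one] at hp0 hp1 hw0 hw1
  simp only [bdot]
  linear_combination -(w 0) * hp0 - w 1 * hp1 + p 0 * hw0 + p 1 * hw1

theorem stokes_operator_symmetric_general
    (ν : ℝ) (ξ₁ ξ₂ : ℝ) (lam : ℂ)
    (u v : ℝ → Fin 2 → ℂ)
    (hu : ContDiffOn ℝ 2 u (Ici 0)) (hv : ContDiffOn ℝ 2 v (Ici 0))
    (hucs : HasCompactSupport u)
    (hubc : -(derivWithin u (Ici 0) 0 + ((Real.sqrt (ξ₁ ^ 2 + ξ₂ ^ 2) : ℝ) : ℂ) • u 0)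
        + (((Real.sqrt (ξ₁ ^ 2 + ξ₂ ^ 2) : ℝ) : ℂ))⁻¹ •
          (((ξ₁ : ℂ) * u 0 0 + (ξ₂ : ℂ) * u 0 1) • ![(ξ₁ : ℂ), (ξ₂ : ℂ)]) = 0)
    (hvbc : -(derivWithin v (Ici 0) 0 + ((Real.sqrt (ξ₁ ^ 2 + ξ₂ ^ 2) : ℝ) : ℂ) • v 0)
        + (((Real.sqrt (ξ₁ ^ 2 + ξ₂ ^ 2) : ℝ) : ℂ))⁻¹ •
          (((ξ₁ : ℂ) * v 0 0 + (ξ₂ : ℂ) * v 0 1) • ![(ξ₁ : ℂ), (ξ₂ : ℂ)]) = 0) :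
    ∫ z in Ioi (0 : ℝ),
        bdot (lam • u z - (ν : ℂ) • derivWithin (derivWithin u (Ici 0)) (Ici 0) z
              + ((ν * (ξ₁ ^ 2 + ξ₂ ^ 2) : ℝ) : ℂ) • u z) (v z)
      = ∫ z in Ioi (0 : ℝ),
          bdot (u z) (lam • v z - (ν : ℂ) • derivWithin (derivWithin v (Ici 0)) (Ici 0) z
              + ((ν * (ξ₁ ^ 2 + ξ₂ ^ 2) : ℝ) : ℂ) • v z) := by
  set u'' := derivWithin (derivWithin u (Ici 0)) (Ici (0 : ℝ))
  set v'' := derivWithin (derivWithin v (Ici 0)) (Ici (0 : ℝ))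
  set c : ℂ := ((ν * (ξ₁ ^ 2 + ξ₂ ^ 2) : ℝ) : ℂ)
  have hgreen : ∫ z in Ioi (0 : ℝ), (bdot (u'' z) (v z) - bdot (u z) (v'' z)) = 0 := by
    rw [integral_Ioi_bdot_green hu hv hucs, bdot_eq_of_boundary_condition hubc hvbc, sub_self]
  have hR_int : IntegrableOn (fun z ↦ bdot (u z) (lam • v z - (ν : ℂ) • v'' z + c • v z))
      (Ioi 0) :=
    hucs.bdot_left.integrableOn_Ioi <| hu.continuousOn.bdot <|
      ((hv.continuousOn.const_smul lam).sub
        ((hv.continuousOn_derivWithin_derivWithin (uniqueDiffOn_Ici 0)).const_smul (ν : ℂ))).add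
        (hv.continuousOn.const_smul c)
  calc _ = ∫ z in Ioi (0 : ℝ), (bdot (u z) (lam • v z - (ν : ℂ) • v'' z + c • v z)
          - ν * (bdot (u'' z) (v z) - bdot (u z) (v'' z))) := by
        congr 1 with z
        simp only [bdot, Pi.add_apply, Pi.sub_apply, Pi.smul_apply, smul_eq_mul]
        ring
    _ = _ := by
        rw [integral_sub hR_int ((integrableOn_Ioi_bdot_green hu hv hucs).const_mul _),
          integral_const_mul, hgreen, mul_zero, sub_zero]

/-- Symmetry of the resolvent operator (λ - A_ξ) for the Stokes vorticity operator
A_ξ = ν(∂_z² - |ξ|²) with the vorticity boundary condition, proved by integration by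
parts: the boundary terms cancel due to the common boundary condition. -/
theorem stokes_operator_symmetric
    (ν : ℝ) (hν : 0 < ν) (ξ₁ ξ₂ : ℝ) (hξ : (ξ₁, ξ₂) ≠ (0, 0)) (lam : ℂ)
    (u v : ℝ → Fin 2 → ℂ)
    (hu : ContDiffOn ℝ 2 u (Ici 0)) (hv : ContDiffOn ℝ 2 v (Ici 0))
    (hucs : HasCompactSupport u) (hvcs : HasCompactSupport v)
    (hubc : -(derivWithin u (Ici 0) 0 + ((Real.sqrt (ξ₁ ^ 2 + ξ₂ ^ 2) : ℝ) : ℂ) • u 0)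
        + (((Real.sqrt (ξ₁ ^ 2 + ξ₂ ^ 2) : ℝ) : ℂ))⁻¹ •
          (((ξ₁ : ℂ) * u 0 0 + (ξ₂ : ℂ) * u 0 1) • ![(ξ₁ : ℂ), (ξ₂ : ℂ)]) = 0)
    (hvbc : -(derivWithin v (Ici 0) 0 + ((Real.sqrt (ξ₁ ^ 2 + ξ₂ ^ 2) : ℝ) : ℂ) • v 0)
        + (((Real.sqrt (ξ₁ ^ 2 + ξ₂ ^ 2) : ℝ) : ℂ))⁻¹ •
          (((ξ₁ : ℂ) * v 0 0 + (ξ₂ : ℂ) * v 0 1) • ![(ξ₁ : ℂ), (ξ₂ : ℂ)]) = 0) :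
    ∫ z in Ioi (0 : ℝ),
        bdot (lam • u z - (ν : ℂ) • derivWithin (derivWithin u (Ici 0)) (Ici 0) z
              + ((ν * (ξ₁ ^ 2 + ξ₂ ^ 2) : ℝ) : ℂ) • u z) (v z)
      = ∫ z in Ioi (0 : ℝ),
          bdot (u z) (lam • v z - (ν : ℂ) • derivWithin (derivWithin v (Ici 0)) (Ici 0) z
              + ((ν * (ξ₁ ^ 2 + ξ₂ ^ 2) : ℝ) : ℂ) • v z) :=
  stokes_operator_symmetric_general ν ξ₁ ξ₂ lam u v hu hv hucs hubc hvbc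
end
end
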